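/- arXiv:1003.2288 — 4 statements merged into one kernel-verified Lean document; each statement's English description precedes it below -/
import Mathlib

section
/- Let x be a bounded operator and let {φn : n ∈ I1} be a total (complete) orthonormal family in H of eigenvectors of N1 = x x†. Suppose N2 = x† x is injective. Then the family {x† φn : n ∈ I2}, where I2 = {n ∈ I1 : x† φn ≠ 0}, is total in H. -/
open ContinuousLinearMap

/-
Since `x† x` is injective, so is `x`; hence the range of `x†`, whose closure is `(ker x)ᗮ`, is
dense. A continuous linear map with dense range sends a total family to a total family, and
discarding the vectors `x† φₙ = 0` does not change the span.
-/

theorem Set.image_setOf_ne_eq_range_diff {α β : Type*} (f : α → β) (b : β) :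
    f '' {a | f a ≠ b} = Set.range f \ {b} := by
  ext y
  constructor
  · rintro ⟨a, ha, rfl⟩
    exact ⟨⟨a, rfl⟩, ha⟩
  · rintro ⟨⟨a, rfl⟩, ha⟩
    exact ⟨a, ha, rfl⟩

theorem Submodule.topologicalClosure_span_image_eq_top {R M M₂ : Type*} [Semiring R]
    [TopologicalSpace M] [AddCommMonoid M] [Module R M] [ContinuousAdd M]
    [ContinuousConstSMul R M] [TopologicalSpace M₂] [AddCommMonoid M₂] [Module R M₂]
    [ContinuousAdd M₂] [ContinuousConstSMul R M₂]
    {f : M →L[R] M₂} (hf : DenseRange f) {s : Set M}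
    (hs : (Submodule.span R s).topologicalClosure = ⊤) :
    (Submodule.span R (f '' s)).topologicalClosure = ⊤ := by
  rw [← Submodule.dense_iff_topologicalClosure_eq_top] at hs ⊢
  rw [← ContinuousLinearMap.coe_coe, Submodule.span_image, Submodule.map_coe]
  exact hf.dense_image f.continuous hs

theorem ContinuousLinearMap.denseRange_adjoint_of_injective {𝕜 E F : Type*} [RCLike 𝕜]
    [NormedAddCommGroup E] [InnerProductSpace 𝕜 E] [CompleteSpace E]
    [NormedAddCommGroup F] [InnerProductSpace 𝕜 F] [CompleteSpace F]
    {A : E →L[𝕜] F} (hA : Function.Injective A) : DenseRange (adjoint A) := by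
  have hrange : (adjoint A).range.topologicalClosure = ⊤ := by
    rw [← A.orthogonal_ker, LinearMap.ker_eq_bot.mpr hA, Submodule.bot_orthogonal_eq_top]
  exact Submodule.dense_iff_topologicalClosure_eq_top.mpr hrange

theorem adjoint_family_total_of_N2_injective_general
    {H : Type*} [NormedAddCommGroup H] [InnerProductSpace ℂ H] [CompleteSpace H]
    {ι : Type*} (x : H →L[ℂ] H) (φ : ι → H)
    (htotal : (Submodule.span ℂ (Set.range φ)).topologicalClosure = ⊤)
    (hinj : Function.Injective ⇑(ContinuousLinearMap.adjoint x ∘L x)) :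
    (Submodule.span ℂ
        ((fun n => ContinuousLinearMap.adjoint x (φ n)) ''
          {n | ContinuousLinearMap.adjoint x (φ n) ≠ 0})).topologicalClosure = ⊤ := by
  have hx : Function.Injective x := by
    rw [coe_comp] at hinj
    exact hinj.of_comp
  rw [Set.image_setOf_ne_eq_range_diff (fun n => adjoint x (φ n)), Set.range_comp',
    Submodule.span_sdiff_singleton_zero]
  exact Submodule.topologicalClosure_span_image_eq_top (denseRange_adjoint_of_injective hx) htotal

theorem adjoint_family_total_of_N2_injective
    {H : Type*} [NormedAddCommGroup H] [InnerProductSpace ℂ H] [CompleteSpace H]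
    {ι : Type*} (x : H →L[ℂ] H) (φ : ι → H) (ν : ι → ℂ)
    (horth : Orthonormal ℂ φ)
    (htotal : (Submodule.span ℂ (Set.range φ)).topologicalClosure = ⊤)
    (hν : ∀ n, (x ∘L ContinuousLinearMap.adjoint x) (φ n) = ν n • φ n)
    (hinj : Function.Injective ⇑(ContinuousLinearMap.adjoint x ∘L x)) :
    (Submodule.span ℂ
        ((fun n => ContinuousLinearMap.adjoint x (φ n)) ''
          {n | ContinuousLinearMap.adjoint x (φ n) ≠ 0})).topologicalClosure = ⊤ :=
  adjoint_family_total_of_N2_injective_general x φ htotal hinj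
end

section
/- Let Θ1 and x be bounded operators with x invertible and [Θ1, x x†] = 0. Then Θ2 := x⁻¹ Θ1 x is self-adjoint if and only if Θ1 is self-adjoint. -/
open ContinuousLinearMap

theorem Theta2_selfAdjoint_iff_Theta1_selfAdjoint
    {H : Type*} [NormedAddCommGroup H] [InnerProductSpace ℂ H] [CompleteSpace H]
    (Θ1 x xinv : H →L[ℂ] H)
    (hinv1 : x ∘L xinv = 1) (hinv2 : xinv ∘L x = 1)
    (hcomm : Θ1 ∘L (x ∘L ContinuousLinearMap.adjoint x)
      = (x ∘L ContinuousLinearMap.adjoint x) ∘L Θ1) :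
    IsSelfAdjoint (xinv ∘L Θ1 ∘L x) ↔ IsSelfAdjoint Θ1 := by
  have h1 : x * xinv = 1 := hinv1
  have h2 : xinv * x = 1 := hinv2
  have hs1 : star x * star xinv = 1 := by rw [← star_mul, h2, star_one]
  have hs2 : star xinv * star x = 1 := by rw [← star_mul, h1, star_one]
  have hc : Θ1 * (x * star x) = (x * star x) * Θ1 := hcomm
  have hc' : Θ1 * (x * star x) = x * (star x * Θ1) := by
    rw [hc, mul_assoc]
  have e1 : ∀ t : H →L[ℂ] H, xinv * (x * t) = t := fun t => by
    rw [← mul_assoc, h2, one_mul]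
  have e2 : ∀ t : H →L[ℂ] H, x * (xinv * t) = t := fun t => by
    rw [← mul_assoc, h1, one_mul]
  have e4 : ∀ t : H →L[ℂ] H, star xinv * (star x * t) = t := fun t => by
    rw [← mul_assoc, hs2, one_mul]
  have inj : ∀ f g : H →L[ℂ] H, x * (f * star x) = x * (g * star x) → f = g := by
    intro f g h
    have h' := congrArg (fun t => xinv * (t * star xinv)) h
    simp only [mul_assoc, hs1, mul_one, e1] at h'
    exact h'
  constructor
  · intro h
    have h' : star (xinv * (Θ1 * x)) = xinv * (Θ1 * x) := h.star_eq
    simp only [star_mul, mul_assoc] at h'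
    -- h' : star x * (star Θ1 * star xinv) = xinv * (Θ1 * x)
    have h'' := congrArg (fun t => x * (t * star x)) h'
    simp only [mul_assoc, hs2, mul_one] at h''
    -- h'' : x * (star x * star Θ1) = x * (xinv * (Θ1 * (x * star x)))
    rw [hc'] at h''
    simp only [e2] at h''
    -- h'' : x * (star x * star Θ1) = x * (star x * Θ1)
    have h3 := congrArg (fun t => xinv * t) h''
    simp only [e1] at h3
    have h4 := congrArg (fun t => star xinv * t) h3
    simp only [e4] at h4
    exact h4
  · intro h
    have hΘ : star Θ1 = Θ1 := h.star_eq
    show star (xinv * (Θ1 * x)) = xinv * (Θ1 * x)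
    simp only [star_mul, mul_assoc, hΘ]
    -- goal : star x * (Θ1 * star xinv) = xinv * (Θ1 * x)
    apply inj
    simp only [mul_assoc, hs2, mul_one]
    rw [hc']
    simp only [e2]
end

section
/- Let Θ1, x be bounded operators with x invertible, [Θ1, x x†] = 0, and suppose Θ2 := x⁻¹ Θ1 x equals Θ1†. Then x commutes with Θ1 + Θ1†, and likewise x† commutes with Θ1 + Θ1†. -/
/-!
From `x⁻¹ Θ₁ x = Θ₁†` we get `x Θ₁† = Θ₁ x`. Multiplying on the right by `x†` and using
`[Θ₁, x x†] = 0` gives `x (Θ₁† x†) = x (x† Θ₁)`, so `Θ₁† x† = x† Θ₁`, whose adjoint is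
`x Θ₁ = Θ₁† x`. Thus `x` swaps `Θ₁` and `Θ₁†`, hence commutes with their sum; taking adjoints,
so does `x†`.
-/

section Monoid

variable {M : Type*} [Monoid M]

theorem mul_eq_mul_of_inv_mul_mul_eq {x xinv t s : M} (hinv : x * xinv = 1)
    (hconj : xinv * t * x = s) : x * s = t * x := by
  rw [← hconj, ← mul_assoc, ← mul_assoc, hinv, one_mul]

variable [StarMul M]

theorem star_mul_star_eq_of_mul_star_eq {x xinv t : M} (hinv : xinv * x = 1)
    (hcomm : Commute t (x * star x)) (h : x * star t = t * x) :
    star t * star x = star x * t := by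
  have hx : x * (star t * star x) = x * (star x * t) :=
    calc x * (star t * star x) = t * (x * star x) := by rw [← mul_assoc, h, mul_assoc]
      _ = x * star x * t := hcomm
      _ = x * (star x * t) := mul_assoc _ _ _
  simpa only [← mul_assoc, hinv, one_mul] using congrArg (xinv * ·) hx

end Monoid

theorem commute_add_star_of_inv_mul_mul_eq_star {R : Type*} [Semiring R] [StarRing R]
    {x xinv t : R} (hinv1 : x * xinv = 1) (hinv2 : xinv * x = 1)
    (hcomm : Commute t (x * star x)) (hconj : xinv * t * x = star t) :
    Commute x (t + star t) ∧ Commute (star x) (t + star t) := by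
  have hA : x * star t = t * x := mul_eq_mul_of_inv_mul_mul_eq hinv1 hconj
  have hB : t * star x = star x * star t := by
    simpa only [star_mul, star_star] using congrArg star hA
  have hC : star t * star x = star x * t := star_mul_star_eq_of_mul_star_eq hinv2 hcomm hA
  have hD : x * t = star t * x := by
    simpa only [star_mul, star_star] using congrArg star hC
  constructor
  · change x * (t + star t) = (t + star t) * x
    rw [mul_add, add_mul, hA, hD, add_comm]
  · change star x * (t + star t) = (t + star t) * star x
    rw [mul_add, add_mul, ← hB, ← hC, add_comm]

theorem x_commutes_with_sum_of_Theta1_and_adjoint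
    {H : Type*} [NormedAddCommGroup H] [InnerProductSpace ℂ H] [CompleteSpace H]
    (Θ1 x xinv : H →L[ℂ] H)
    (hinv1 : x ∘L xinv = 1) (hinv2 : xinv ∘L x = 1)
    (hcomm : Θ1 ∘L (x ∘L ContinuousLinearMap.adjoint x)
      = (x ∘L ContinuousLinearMap.adjoint x) ∘L Θ1)
    (hΘ2 : xinv ∘L Θ1 ∘L x = ContinuousLinearMap.adjoint Θ1) :
    x ∘L (Θ1 + ContinuousLinearMap.adjoint Θ1)
        = (Θ1 + ContinuousLinearMap.adjoint Θ1) ∘L x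
      ∧ ContinuousLinearMap.adjoint x ∘L (Θ1 + ContinuousLinearMap.adjoint Θ1)
        = (Θ1 + ContinuousLinearMap.adjoint Θ1) ∘L ContinuousLinearMap.adjoint x :=
  commute_add_star_of_inv_mul_mul_eq_star hinv1 hinv2 hcomm ((mul_assoc _ _ _).trans hΘ2)
end

section
/- Let T be a bounded invertible operator and Θ1 a bounded operator that is (T T†)⁻¹-pseudo-hermitian, i.e., Θ1† = (T T†)⁻¹ Θ1 (T T†). Suppose Θ1,T := T⁻¹ Θ1 T admits an orthonormal basis {en} of eigenvectors: Θ1,T en = εn en. Then all εn are real, and {T en} is a Riesz basis of eigenvectors of Θ1 with real eigenvalues. -/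
/-!
With `η = T T†`, the pseudo-hermiticity relation `Θ1† = η⁻¹ Θ1 η` conjugated by `T` reads
`(T⁻¹ Θ1 T)† = T⁻¹ Θ1 T`, because `T† η⁻¹ = T⁻¹` and `η T⁻¹† = T`. Eigenvalues of a self-adjoint
operator are real, and `T` carries eigenvectors of `T⁻¹ Θ1 T` to eigenvectors of `Θ1`.
-/

open ContinuousLinearMap

theorem isSelfAdjoint_mul_mul_of_star_eq_conj {R : Type*} [Monoid R] [StarMul R]
    {Θ T Tinv S : R} (hT : Tinv * T = 1) (hS : T * star T * S = 1)
    (hΘ : star Θ = S * Θ * (T * star T)) : IsSelfAdjoint (Tinv * Θ * T) := by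
  have hleft : star T * S = Tinv := by
    calc star T * S = Tinv * (T * star T * S) := by simp only [← mul_assoc, hT, one_mul]
      _ = Tinv := by rw [hS, mul_one]
  have hright : T * star T * star Tinv = T := by
    rw [mul_assoc, ← star_mul, hT, star_one, mul_one]
  calc star (Tinv * Θ * T) = star T * (S * Θ * (T * star T)) * star Tinv := by
        rw [star_mul, star_mul, hΘ]; simp only [mul_assoc]
    _ = (star T * S) * Θ * (T * star T * star Tinv) := by simp only [mul_assoc]
    _ = Tinv * Θ * T := by rw [hleft, hright]

theorem ContinuousLinearMap.im_eq_zero_of_isSelfAdjoint_of_apply_eq_smul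
    {H : Type*} [NormedAddCommGroup H] [InnerProductSpace ℂ H] [CompleteSpace H]
    {A : H →L[ℂ] H} (hA : IsSelfAdjoint A) {x : H} (hx : x ≠ 0) {μ : ℂ} (hμ : A x = μ • x) :
    μ.im = 0 := by
  have hsym : (A : H →ₗ[ℂ] H).IsSymmetric := isSelfAdjoint_iff_isSymmetric.mp hA
  have hvec : Module.End.HasEigenvector (A : H →ₗ[ℂ] H) μ x :=
    ⟨Module.End.mem_eigenspace_iff.mpr hμ, hx⟩
  exact Complex.conj_eq_iff_im.mp
    (hsym.conj_eigenvalue_eq_self (Module.End.hasEigenvalue_of_hasEigenvector hvec))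

theorem ContinuousLinearMap.apply_eq_smul_of_conj_apply_eq_smul
    {H : Type*} [NormedAddCommGroup H] [InnerProductSpace ℂ H]
    {Θ T Tinv : H →L[ℂ] H} (hT : T ∘L Tinv = 1) {x : H} {μ : ℂ}
    (hx : (Tinv ∘L Θ ∘L T) x = μ • x) : Θ (T x) = μ • T x := by
  have := congrArg T hx
  rwa [map_smul, comp_apply, ← comp_apply T Tinv, hT, one_apply_eq_self] at this

theorem riesz_eigenbasis_of_pseudo_hermitian_general
    {H : Type*} [NormedAddCommGroup H] [InnerProductSpace ℂ H] [CompleteSpace H]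
    {ι : Type*} (e : HilbertBasis ι ℂ H)
    (Θ1 T Tinv S1inv : H →L[ℂ] H)
    (hT1 : T ∘L Tinv = 1) (hT2 : Tinv ∘L T = 1)
    (hS1 : (T ∘L ContinuousLinearMap.adjoint T) ∘L S1inv = 1)
    (hph : ContinuousLinearMap.adjoint Θ1
      = S1inv ∘L Θ1 ∘L (T ∘L ContinuousLinearMap.adjoint T))
    (ε : ι → ℂ) (hε : ∀ n, (Tinv ∘L Θ1 ∘L T) (e n) = ε n • e n) :
    (∀ n, (ε n).im = 0) ∧ ∀ n, Θ1 (T (e n)) = ε n • T (e n) := by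
  have hsa : IsSelfAdjoint (Tinv ∘L Θ1 ∘L T) := by
    rw [← mul_def, ← mul_def, ← mul_assoc]
    refine isSelfAdjoint_mul_mul_of_star_eq_conj hT2 hS1 ?_
    rw [mul_assoc]
    exact hph
  refine ⟨fun n => im_eq_zero_of_isSelfAdjoint_of_apply_eq_smul hsa ?_ (hε n),
    fun n => apply_eq_smul_of_conj_apply_eq_smul hT1 (hε n)⟩
  exact e.orthonormal.ne_zero n

theorem riesz_eigenbasis_of_pseudo_hermitian
    {H : Type*} [NormedAddCommGroup H] [InnerProductSpace ℂ H] [CompleteSpace H]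
    {ι : Type*} (e : HilbertBasis ι ℂ H)
    (Θ1 T Tinv S1inv : H →L[ℂ] H)
    (hT1 : T ∘L Tinv = 1) (hT2 : Tinv ∘L T = 1)
    (hS1 : (T ∘L ContinuousLinearMap.adjoint T) ∘L S1inv = 1)
    (hS2 : S1inv ∘L (T ∘L ContinuousLinearMap.adjoint T) = 1)
    (hph : ContinuousLinearMap.adjoint Θ1
      = S1inv ∘L Θ1 ∘L (T ∘L ContinuousLinearMap.adjoint T))
    (ε : ι → ℂ) (hε : ∀ n, (Tinv ∘L Θ1 ∘L T) (e n) = ε n • e n) :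
    (∀ n, (ε n).im = 0) ∧ ∀ n, Θ1 (T (e n)) = ε n • T (e n) :=
  riesz_eigenbasis_of_pseudo_hermitian_general e Θ1 T Tinv S1inv hT1 hT2 hS1 hph ε hε
end
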